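/- arXiv:1403.1883 — 3 statements merged into one kernel-verified Lean document; each statement's English description precedes it below -/
import Mathlib

section
/- Assume the non-degeneracy condition span{∇V(q) : q ∈ ℝ^d} = ℝ^d, and fix an index i ∈ {1,…,d}. Then every smooth function Φ : ℝ^d × ℝ^d → ℝ satisfying −(A₀Φ)(q,p) = (M⁻¹p)_i for all (q,p) ∈ ℝ^d × ℝ^d has a genuine spatial dependence: its gradient in the position variable, ∇_qΦ, is not identically zero. Equivalently, there is no smooth function φ : ℝ^d → ℝ of the momentum variable alone such that Φ(q,p) = φ(p) solves −A₀Φ = (M⁻¹p)_i everywhere. -/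
open MeasureTheory
open scoped BigOperators

noncomputable section

/-- Partial derivative in the `i`-th position variable. -/
def pdQ {d : ℕ} (i : Fin d) (f : (Fin d → ℝ) → (Fin d → ℝ) → ℝ) (q p : Fin d → ℝ) : ℝ :=
  fderiv ℝ (fun q' => f q' p) q (Pi.single i 1)

/-- Partial derivative in the `i`-th momentum variable. -/
def pdP {d : ℕ} (i : Fin d) (f : (Fin d → ℝ) → (Fin d → ℝ) → ℝ) (q p : Fin d → ℝ) : ℝ :=
  fderiv ℝ (fun p' => f q p') p (Pi.single i 1)

/-- Generator of the equilibrium Langevin dynamics: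
`A₀f = (M⁻¹p)·∇_q f − ∇V(q)·∇_p f + γ(−(M⁻¹p)·∇_p f + β⁻¹ Δ_p f)`. -/
def A0 {d : ℕ} (M : Matrix (Fin d) (Fin d) ℝ) (V : (Fin d → ℝ) → ℝ) (γ β : ℝ)
    (f : (Fin d → ℝ) → (Fin d → ℝ) → ℝ) (q p : Fin d → ℝ) : ℝ :=
  (∑ i, M⁻¹.mulVec p i * pdQ i f q p)
    - (∑ i, fderiv ℝ V q (Pi.single i 1) * pdP i f q p)
    + γ * (-(∑ i, M⁻¹.mulVec p i * pdP i f q p)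
      + β⁻¹ * ∑ i, pdP i (fun q' p' => pdP i f q' p') q p)

/-! If `∇_q Φ ≡ 0`, then `Φ(q, p) = φ(p)` and `A₀Φ(q, p) = -∇V(q)·∇φ(p) + (terms in p alone)`.
A continuous periodic `V` attains its minimum at some `q₀`, where `∇V(q₀) = 0`, so comparing the
equation `−A₀Φ = (M⁻¹p)_i` at `q` and at `q₀` gives `∇V(q)·∇φ(p) = 0` for every `q`. The
non-degeneracy of `∇V` forces `∇φ ≡ 0`, hence `A₀Φ ≡ 0`, which is absurd at `p = M eᵢ`. -/

open Matrix

def partials {ι : Type*} [DecidableEq ι] (f : (ι → ℝ) → ℝ) (x : ι → ℝ) : ι → ℝ :=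
  fun j => fderiv ℝ f x (Pi.single j 1)

theorem fderiv_eq_zero_of_partials_eq_zero {ι : Type*} [Finite ι] [DecidableEq ι]
    {f : (ι → ℝ) → ℝ} {x : ι → ℝ} (h : partials f x = 0) : fderiv ℝ f x = 0 :=
  ContinuousLinearMap.coe_injective <| (Pi.basisFun ℝ ι).ext fun j => by
    simpa [partials] using congrFun h j

theorem eq_zero_of_forall_dotProduct_eq_zero_of_span_eq_top {ι R : Type*} [Fintype ι]
    [CommRing R] [LinearOrder R] [IsStrictOrderedRing R] {S : Set (ι → R)}
    (hS : Submodule.span R S = ⊤) {w : ι → R} (h : ∀ v ∈ S, v ⬝ᵥ w = 0) : w = 0 := by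
  have hker : Submodule.span R S ≤ LinearMap.ker ((dotProductBilin R R).flip w) :=
    Submodule.span_le.mpr h
  rw [hS] at hker
  exact dotProduct_self_eq_zero.mp (hker Submodule.mem_top)

theorem exists_isMinOn_of_periodic {ι α : Type*} [Finite ι] [LinearOrder α] [TopologicalSpace α]
    [ClosedIicTopology α] {L : ℝ} (hL : 0 < L) {V : (ι → ℝ) → α} (hV : Continuous V)
    (hper : ∀ (q : ι → ℝ) (m : ι → ℤ), V (fun j => q j + L * (m j : ℝ)) = V q) :
    ∃ q₀, IsMinOn V Set.univ q₀ := by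
  obtain ⟨q₀, -, hq₀⟩ := (isCompact_Icc (a := (0 : ι → ℝ)) (b := fun _ => L)).exists_isMinOn
    ⟨0, le_rfl, fun _ => hL.le⟩ hV.continuousOn
  refine ⟨q₀, isMinOn_univ_iff.mpr fun q => ?_⟩
  -- translate `q` by the lattice into the fundamental box `[0, L]^ι`
  let r : ι → ℝ := fun j => toIcoMod hL 0 (q j)
  have hr : r ∈ Set.Icc 0 fun _ => L := ⟨fun j => (toIcoMod_mem_Ico' hL (q j)).1,
    fun j => (toIcoMod_mem_Ico' hL (q j)).2.le⟩
  have hVr : V r = V q := by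
    rw [← hper r (fun j => toIcoDiv hL 0 (q j))]
    congr 1
    funext j
    rw [mul_comm, ← zsmul_eq_mul, toIcoMod_add_toIcoDiv_zsmul]
  exact hVr ▸ hq₀ hr

theorem eq_const_of_pdQ_eq_zero {d : ℕ} {Φ : (Fin d → ℝ) → (Fin d → ℝ) → ℝ}
    (hΦ : ∀ p, Differentiable ℝ fun q => Φ q p) (h : ∀ q p j, pdQ j Φ q p = 0) :
    Φ = fun _ => Φ 0 :=
  funext fun q => funext fun p => is_const_of_fderiv_eq_zero (hΦ p)
    (fun x => fderiv_eq_zero_of_partials_eq_zero (funext (h x p))) q 0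

section FunConst

variable {d : ℕ} (M : Matrix (Fin d) (Fin d) ℝ) (V : (Fin d → ℝ) → ℝ) (γ β : ℝ)

theorem A0_fun_const_sub_A0_fun_const (φ : (Fin d → ℝ) → ℝ) (q q' p : Fin d → ℝ) :
    A0 M V γ β (fun _ => φ) q p - A0 M V γ β (fun _ => φ) q' p
      = partials V q' ⬝ᵥ partials φ p - partials V q ⬝ᵥ partials φ p := by
  simp only [A0, pdQ, pdP, partials, dotProduct, fderiv_fun_const, Pi.zero_apply,
    _root_.zero_apply]
  ring

theorem A0_fun_const_of_fderiv_eq_zero {φ : (Fin d → ℝ) → ℝ} (h : fderiv ℝ φ = 0)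
    (q p : Fin d → ℝ) :
    A0 M V γ β (fun _ => φ) q p = 0 := by
  simp [A0, pdQ, pdP, h]

variable {M V γ β}

theorem fderiv_eq_zero_of_A0_fun_const_eq {φ : (Fin d → ℝ) → ℝ} {q₀ : Fin d → ℝ}
    (hq₀ : fderiv ℝ V q₀ = 0)
    (hspan : Submodule.span ℝ (Set.range (partials V)) = ⊤)
    (hA : ∀ q p, A0 M V γ β (fun _ => φ) q p = A0 M V γ β (fun _ => φ) q₀ p) :
    fderiv ℝ φ = 0 := by
  funext p
  refine fderiv_eq_zero_of_partials_eq_zero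
    (eq_zero_of_forall_dotProduct_eq_zero_of_span_eq_top hspan ?_)
  rintro _ ⟨q, rfl⟩
  have hcrit : partials V q₀ = 0 := funext fun j => by simp [partials, hq₀]
  have := A0_fun_const_sub_A0_fun_const M V γ β φ q q₀ p
  rw [hA, sub_self, hcrit, zero_dotProduct] at this
  linarith

end FunConst

theorem genuine_spatial_dependence_general
    {d : ℕ} (L γ β : ℝ) (hL : 0 < L)
    (M : Matrix (Fin d) (Fin d) ℝ) (hM : M.PosDef)
    (V : (Fin d → ℝ) → ℝ) (hV : ContDiff ℝ (⊤ : ℕ∞) V)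
    (hVper : ∀ (q : Fin d → ℝ) (m : Fin d → ℤ), V (fun j => q j + L * (m j : ℝ)) = V q)
    (hspan : Submodule.span ℝ
      (Set.range (fun q : Fin d → ℝ => fun i : Fin d => fderiv ℝ V q (Pi.single i 1))) = ⊤)
    (i : Fin d)
    (Φ : (Fin d → ℝ) → (Fin d → ℝ) → ℝ)
    (hΦ : ContDiff ℝ (⊤ : ℕ∞) (Function.uncurry Φ))
    (hPoisson : ∀ q p : Fin d → ℝ, -(A0 M V γ β Φ q p) = M⁻¹.mulVec p i) :
    ¬ (∀ (q p : Fin d → ℝ) (j : Fin d), pdQ j Φ q p = 0) := by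
  intro hq
  have hΦq : ∀ p, Differentiable ℝ fun q => Φ q p := fun p =>
    (hΦ.differentiable (by simp)).comp (differentiable_id.prodMk (differentiable_const p))
  rw [eq_const_of_pdQ_eq_zero hΦq hq] at hPoisson
  obtain ⟨q₀, hq₀⟩ := exists_isMinOn_of_periodic hL hV.continuous hVper
  have hφ : fderiv ℝ (Φ 0) = 0 :=
    fderiv_eq_zero_of_A0_fun_const_eq (hq₀.isLocalMin Filter.univ_mem).fderiv_eq_zero hspan
      fun q p => neg_injective ((hPoisson q p).trans (hPoisson q₀ p).symm)
  have hMinv : M⁻¹ *ᵥ (M *ᵥ Pi.single i 1) = Pi.single i 1 := by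
    rw [mulVec_mulVec, nonsing_inv_mul M hM.det_pos.ne'.isUnit, one_mulVec]
  have hAt := hPoisson 0 (M *ᵥ Pi.single i 1)
  rw [A0_fun_const_of_fderiv_eq_zero M V γ β hφ, hMinv] at hAt
  simp at hAt

/-- under the non-degeneracy condition `span{∇V(q) : q ∈ ℝ^d} = ℝ^d`,
any smooth solution `Φ` of `−A₀Φ = (M⁻¹p)_i` has a genuine spatial dependence:
`∇_q Φ` is not identically zero. -/
theorem genuine_spatial_dependence
    {d : ℕ} (hd : 1 ≤ d) (L γ β : ℝ) (hL : 0 < L) (hγ : 0 < γ) (hβ : 0 < β)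
    (M : Matrix (Fin d) (Fin d) ℝ) (hM : M.PosDef)
    (V : (Fin d → ℝ) → ℝ) (hV : ContDiff ℝ (⊤ : ℕ∞) V)
    (hVper : ∀ (q : Fin d → ℝ) (m : Fin d → ℤ), V (fun j => q j + L * (m j : ℝ)) = V q)
    (hspan : Submodule.span ℝ
      (Set.range (fun q : Fin d → ℝ => fun i : Fin d => fderiv ℝ V q (Pi.single i 1))) = ⊤)
    (i : Fin d)
    (Φ : (Fin d → ℝ) → (Fin d → ℝ) → ℝ)
    (hΦ : ContDiff ℝ (⊤ : ℕ∞) (Function.uncurry Φ))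
    (hPoisson : ∀ q p : Fin d → ℝ, -(A0 M V γ β Φ q p) = M⁻¹.mulVec p i) :
    ¬ (∀ (q p : Fin d → ℝ) (j : Fin d), pdQ j Φ q p = 0) :=
  genuine_spatial_dependence_general L γ β hL M hM V hV hVper hspan i Φ hΦ hPoisson
end
end

section
/- Let ψ ∈ E and n ≥ 1 an integer. Then for every real ω ≥ 1 and every φ_ω ∈ E satisfying i·ω·φ_ω − Aφ_ω = ψ, one has ‖φ_ω − Σ_{m=0}^{n−1} (i·ω)^{−(m+1)} A^m ψ‖ ≤ C₀ ‖A^n ψ‖ / ω^n. In particular, if additionally solutions φ_ω exist for all ω ≥ 1, then φ_ω − ψ/(iω) − A ψ/(iω)² − ⋯ − A^{n−1}ψ/(iω)^n has norm O(ω^{−n}) as ω → ∞. -/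
/-! The partial sums `s = Σ_{m<n} (iω)^{-(m+1)} A^m ψ` of the Neumann series satisfy the telescoping
identity `(iω - A) s = ψ - (iω)^{-n} A^n ψ`, so `(iω - A)(φ_ω - s) = (iω)^{-n} A^n ψ`; the resolvent
bound applied to `φ_ω - s` then gives the estimate. -/

section Telescoping

variable {𝕜 M : Type*} [Field 𝕜] [AddCommGroup M] [Module 𝕜 M]

theorem smul_sub_apply_sum_inv_pow_smul (A : M →ₗ[𝕜] M) {z : 𝕜} (hz : z ≠ 0) (ψ : M) (n : ℕ) :
    let s := ∑ m ∈ Finset.range n, (z ^ (m + 1))⁻¹ • (A ^ m) ψ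
    z • s - A s = ψ - (z ^ n)⁻¹ • (A ^ n) ψ := by
  induction n with
  | zero => simp
  | succ n ih =>
    have hzpow : z * (z ^ (n + 1))⁻¹ = (z ^ n)⁻¹ := by field_simp; ring
    have hApow : A ((A ^ n) ψ) = (A ^ (n + 1)) ψ := by rw [pow_succ', Module.End.mul_apply]
    simp only [Finset.sum_range_succ, smul_add, map_add, map_smul, smul_smul, hzpow, hApow] at ih ⊢
    rw [add_sub_add_comm, ih]
    abel

theorem smul_sub_apply_sub_sum_inv_pow_smul (A : M →ₗ[𝕜] M) {z : 𝕜} (hz : z ≠ 0)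
    {φ ψ : M} (hφ : z • φ - A φ = ψ) (n : ℕ) :
    let r := φ - ∑ m ∈ Finset.range n, (z ^ (m + 1))⁻¹ • (A ^ m) ψ
    z • r - A r = (z ^ n)⁻¹ • (A ^ n) ψ := by
  intro r
  have hs := smul_sub_apply_sum_inv_pow_smul A hz ψ n
  simp only at hs
  rw [smul_sub, map_sub, sub_sub_sub_comm, hφ, hs, sub_sub_cancel]

end Telescoping

theorem resolvent_expansion_general
    {E : Type*} [NormedAddCommGroup E] [NormedSpace ℂ E]
    (A : E →ₗ[ℂ] E) (C₀ : ℝ)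
    (hres : ∀ ω : ℝ, 1 ≤ |ω| → ∀ φ : E, ‖φ‖ ≤ C₀ * ‖(Complex.I * (ω : ℂ)) • φ - A φ‖)
    (ψ : E) (n : ℕ) :
    ∀ ω : ℝ, 1 ≤ ω → ∀ φω : E, (Complex.I * (ω : ℂ)) • φω - A φω = ψ →
      ‖φω - ∑ m ∈ Finset.range n, ((Complex.I * (ω : ℂ)) ^ (m + 1))⁻¹ • (A ^ m) ψ‖
        ≤ C₀ * ‖(A ^ n) ψ‖ / ω ^ n := by
  intro ω hω φω hφ
  have hω0 : 0 < ω := one_pos.trans_le hω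
  have hz : Complex.I * (ω : ℂ) ≠ 0 := by simp [hω0.ne']
  have hnorm : ‖Complex.I * (ω : ℂ)‖ = ω := by simp [hω0.le]
  calc _ ≤ C₀ * ‖((Complex.I * (ω : ℂ)) ^ n)⁻¹ • (A ^ n) ψ‖ := by
        rw [← smul_sub_apply_sub_sum_inv_pow_smul A hz hφ n]
        exact hres ω (by rwa [abs_of_pos hω0]) _
    _ = C₀ * ‖(A ^ n) ψ‖ / ω ^ n := by
        rw [norm_smul, norm_inv, norm_pow, hnorm, inv_mul_eq_div, mul_div_assoc]

/-- under a uniform resolvent bound `‖φ‖ ≤ C₀‖iωφ − Aφ‖` along the imaginary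
axis, any solution `φ_ω` of `iω φ_ω − A φ_ω = ψ` satisfies
`‖φ_ω − Σ_{m=0}^{n−1} (iω)^{−(m+1)} A^m ψ‖ ≤ C₀ ‖A^n ψ‖ / ω^n` for every `ω ≥ 1`. -/
theorem resolvent_expansion
    {E : Type*} [NormedAddCommGroup E] [NormedSpace ℂ E]
    (A : E →ₗ[ℂ] E) (C₀ : ℝ) (hC₀ : 0 < C₀)
    (hres : ∀ ω : ℝ, 1 ≤ |ω| → ∀ φ : E, ‖φ‖ ≤ C₀ * ‖(Complex.I * (ω : ℂ)) • φ - A φ‖)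
    (ψ : E) (n : ℕ) (hn : 1 ≤ n) :
    ∀ ω : ℝ, 1 ≤ ω → ∀ φω : E, (Complex.I * (ω : ℂ)) • φω - A φω = ψ →
      ‖φω - ∑ m ∈ Finset.range n, ((Complex.I * (ω : ℂ)) ^ (m + 1))⁻¹ • (A ^ m) ψ‖
        ≤ C₀ * ‖(A ^ n) ψ‖ / ω ^ n :=
  resolvent_expansion_general A C₀ hres ψ n
end

section
/- For every smooth function f : ℝ × ℝ^d × ℝ^d → ℝ that is T-periodic in its first (time) variable, L·ℤ^d-periodic in the position variable q, and compactly supported in the momentum variable p, one has ∫_0^T ∫_{[0,L]^d} ∫_{ℝ^d} ((∂_t f + A₀ f) · f)(t,q,p) μ(q,p) dp dq dt = −(γ/β) ∫_0^T ∫_{[0,L]^d} ∫_{ℝ^d} |∇_p f(t,q,p)|² μ(q,p) dp dq dt. -/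
/-!
Pointwise, the integrand is a sum of exact derivatives minus the Dirichlet density:
`(∂ₜf + A₀f) f μ = ∂ₜ(f²/2) μ + ∑ᵢ ∂_{qᵢ} Qᵢ + ∑ᵢ ∂_{pᵢ} Pᵢ - (γ/β) |∇ₚf|² μ` with the fluxes
`Qᵢ = (M⁻¹p)ᵢ f² μ / 2` and `Pᵢ = (-∂_{qᵢ}V f² / 2 + (γ/β) f ∂_{pᵢ}f) μ`; besides the product rule
this only uses `∇_q μ = -β ∇V μ` and, as `M⁻¹` is symmetric, `∇ₚ μ = -β M⁻¹p μ`.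
Each exact derivative integrates to zero: in `t` by `T`-periodicity, in `q` by the divergence
theorem on the box `[0,L]^d`, whose opposite faces cancel by `L`-periodicity, and in `p` by compact
support. All integrands are continuous and vanish for `p` outside a compact set, so Fubini's
theorem on `[0,T] × [0,L]^d × K` separates the three contributions.
-/

open MeasureTheory
open scoped BigOperators

noncomputable section

/-- The Gibbs density `μ(q,p) = Z⁻¹ exp(−β(V(q) + pᵀM⁻¹p/2))`. -/
def gibbs {d : ℕ} (M : Matrix (Fin d) (Fin d) ℝ) (V : (Fin d → ℝ) → ℝ) (β Z : ℝ)
    (q p : Fin d → ℝ) : ℝ :=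
  Z⁻¹ * Real.exp (-β * (V q + (∑ i, p i * M⁻¹.mulVec p i) / 2))

open Matrix Set
open scoped ContDiff

section GibbsDerivatives
variable {d : ℕ}

theorem fderiv_dotProduct_mulVec_single {A : Matrix (Fin d) (Fin d) ℝ} (hA : A.IsSymm)
    (p : Fin d → ℝ) (i : Fin d) :
    fderiv ℝ (fun p' => p' ⬝ᵥ (A *ᵥ p')) p (Pi.single i 1) = 2 * (A *ᵥ p) i := by
  have hproj : ∀ j, fderiv ℝ (fun y : Fin d → ℝ => y j) p = ContinuousLinearMap.proj j :=
    fun j => (hasFDerivAt_apply j p).fderiv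
  simp only [mulVec, dotProduct]
  simp (disch := fun_prop) only [fderiv_fun_sum, fderiv_fun_mul, hproj, fderiv_fun_const,
    Pi.zero_apply, smul_zero, add_zero, Finset.sum_add_distrib, _root_.add_apply, _root_.sum_apply,
    _root_.smul_apply, ContinuousLinearMap.proj_apply, Pi.single_apply, smul_eq_mul, mul_ite,
    mul_one, mul_zero, Finset.sum_ite_eq', Finset.mem_univ, ↓reduceIte, hA.apply i, mul_comm (p _)]
  ring

variable {M : Matrix (Fin d) (Fin d) ℝ} {V : (Fin d → ℝ) → ℝ} {β Z : ℝ} {q p : Fin d → ℝ}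

theorem pdP_gibbs (hM : M⁻¹.IsSymm) (i : Fin d) :
    pdP i (gibbs M V β Z) q p = -β * (M⁻¹ *ᵥ p) i * gibbs M V β Z q p := by
  have hQ : DifferentiableAt ℝ (fun p' : Fin d → ℝ => p' ⬝ᵥ (M⁻¹ *ᵥ p')) p := by
    simp only [mulVec, dotProduct]; fun_prop
  have h := (((hQ.hasFDerivAt.const_mul (-β / 2)).const_add (-β * V q)).exp).const_mul Z⁻¹
  have hμ : ∀ p', gibbs M V β Z q p'
      = Z⁻¹ * Real.exp (-β * V q + -β / 2 * p' ⬝ᵥ (M⁻¹ *ᵥ p')) :=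
    fun p' => by simp only [gibbs, dotProduct]; ring_nf
  simp_rw [pdP, hμ]
  rw [h.fderiv]
  simp only [_root_.smul_apply, smul_eq_mul, fderiv_dotProduct_mulVec_single hM]
  ring

theorem pdQ_gibbs (hV : DifferentiableAt ℝ V q) (i : Fin d) :
    pdQ i (gibbs M V β Z) q p = -β * fderiv ℝ V q (Pi.single i 1) * gibbs M V β Z q p := by
  simp (disch := fun_prop) only [pdQ, gibbs, fderiv_const_mul, fderiv_exp, fderiv_add_const,
    _root_.smul_apply, smul_eq_mul]
  ring

theorem pdQ_mul_gibbs {u : (Fin d → ℝ) → (Fin d → ℝ) → ℝ} {u' : (Fin d → ℝ) →L[ℝ] ℝ}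
    (hu : HasFDerivAt (fun q' => u q' p) u' q) (hV : DifferentiableAt ℝ V q) (i : Fin d) :
    pdQ i (fun q p => u q p * gibbs M V β Z q p) q p
      = (u' (Pi.single i 1) - β * fderiv ℝ V q (Pi.single i 1) * u q p) * gibbs M V β Z q p := by
  have hμ : DifferentiableAt ℝ (fun q' => gibbs M V β Z q' p) q := by unfold gibbs; fun_prop
  have h := pdQ_gibbs (M := M) (β := β) (Z := Z) (p := p) hV i
  unfold pdQ at h ⊢
  rw [(hu.fun_mul hμ.hasFDerivAt).fderiv]
  simp only [_root_.add_apply, _root_.smul_apply, smul_eq_mul, h]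
  ring

theorem pdP_mul_gibbs (hM : M⁻¹.IsSymm) {u : (Fin d → ℝ) → (Fin d → ℝ) → ℝ}
    {u' : (Fin d → ℝ) →L[ℝ] ℝ} (hu : HasFDerivAt (u q) u' p) (i : Fin d) :
    pdP i (fun q p => u q p * gibbs M V β Z q p) q p
      = (u' (Pi.single i 1) - β * (M⁻¹ *ᵥ p) i * u q p) * gibbs M V β Z q p := by
  have hμ : DifferentiableAt ℝ (gibbs M V β Z q) p := by
    unfold gibbs; simp only [mulVec, dotProduct]; fun_prop
  have h := pdP_gibbs (V := V) (β := β) (Z := Z) (q := q) (p := p) hM i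
  unfold pdP at h ⊢
  rw [(hu.fun_mul hμ.hasFDerivAt).fderiv]
  simp only [_root_.add_apply, _root_.smul_apply, smul_eq_mul, h]
  ring

end GibbsDerivatives

section Fluxes
variable {d : ℕ} (M : Matrix (Fin d) (Fin d) ℝ) (V : (Fin d → ℝ) → ℝ) (γ β Z : ℝ)
  (g : (Fin d → ℝ) → (Fin d → ℝ) → ℝ)

def qFlux (i : Fin d) (q p : Fin d → ℝ) : ℝ :=
  (M⁻¹ *ᵥ p) i / 2 * (g q p * g q p) * gibbs M V β Z q p

def pFlux (i : Fin d) (q p : Fin d → ℝ) : ℝ :=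
  (-fderiv ℝ V q (Pi.single i 1) / 2 * (g q p * g q p) + γ / β * (g q p * pdP i g q p))
    * gibbs M V β Z q p

def divQ (q p : Fin d → ℝ) : ℝ :=
  ∑ i, pdQ i (qFlux M V β Z g i) q p

def divP (q p : Fin d → ℝ) : ℝ :=
  ∑ i, pdP i (pFlux M V γ β Z g i) q p

variable {M V γ β Z g} {q p : Fin d → ℝ} {i : Fin d}

theorem pdQ_qFlux (hg : DifferentiableAt ℝ (fun q' => g q' p) q) (hV : DifferentiableAt ℝ V q) :
    pdQ i (qFlux M V β Z g i) q p = (M⁻¹ *ᵥ p) i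
      * (g q p * pdQ i g q p - β * fderiv ℝ V q (Pi.single i 1) * g q p * g q p / 2)
      * gibbs M V β Z q p := by
  have hu := (hg.hasFDerivAt.fun_mul hg.hasFDerivAt).const_mul ((M⁻¹ *ᵥ p) i / 2)
  unfold qFlux
  rw [pdQ_mul_gibbs hu hV]
  simp only [pdQ, _root_.add_apply, _root_.smul_apply, smul_eq_mul]
  ring

theorem pdP_pFlux (hM : M⁻¹.IsSymm) (hg : DifferentiableAt ℝ (g q) p)
    (hg' : DifferentiableAt ℝ (fun p' => pdP i g q p') p) :
    pdP i (pFlux M V γ β Z g i) q p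
      = (-fderiv ℝ V q (Pi.single i 1) * g q p * pdP i g q p
        + γ / β * (pdP i g q p * pdP i g q p + g q p * pdP i (fun q p => pdP i g q p) q p)
        - β * (M⁻¹ *ᵥ p) i * (-fderiv ℝ V q (Pi.single i 1) / 2 * (g q p * g q p)
          + γ / β * (g q p * pdP i g q p))) * gibbs M V β Z q p := by
  have hu := ((hg.hasFDerivAt.fun_mul hg.hasFDerivAt).const_mul
    (-fderiv ℝ V q (Pi.single i 1) / 2)).fun_add
    ((hg.hasFDerivAt.fun_mul hg'.hasFDerivAt).const_mul (γ / β))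
  unfold pFlux
  rw [pdP_mul_gibbs hM hu]
  simp only [pdP, _root_.add_apply, _root_.smul_apply, smul_eq_mul]
  ring

theorem A0_mul_mul_gibbs (hM : M⁻¹.IsSymm) (hβ : β ≠ 0) (hV : DifferentiableAt ℝ V q)
    (hgq : DifferentiableAt ℝ (fun q' => g q' p) q) (hgp : DifferentiableAt ℝ (g q) p)
    (hgpp : ∀ i, DifferentiableAt ℝ (fun p' => pdP i g q p') p) :
    A0 M V γ β g q p * g q p * gibbs M V β Z q p
      = divQ M V β Z g q p + divP M V γ β Z g q p
        - γ / β * ((∑ i, pdP i g q p ^ 2) * gibbs M V β Z q p) := by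
  simp only [divQ, divP, pdQ_qFlux hgq hV, pdP_pFlux hM hgp (hgpp _), A0, Finset.mul_sum,
    Finset.sum_mul, ← Finset.sum_neg_distrib, ← Finset.sum_add_distrib, ← Finset.sum_sub_distrib]
  refine Finset.sum_congr rfl fun i _ => ?_
  field_simp
  ring

end Fluxes

section SmoothFamilies
variable {d : ℕ} {X : Type*} [NormedAddCommGroup X] [NormedSpace ℝ X]
  {F : X → (Fin d → ℝ) → (Fin d → ℝ) → ℝ} {M : Matrix (Fin d) (Fin d) ℝ} {V : (Fin d → ℝ) → ℝ}
  {γ β Z : ℝ}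

theorem contDiff_param_slice
    (hF : ContDiff ℝ ∞ fun x : X × (Fin d → ℝ) × (Fin d → ℝ) => F x.1 x.2.1 x.2.2)
    (q p : Fin d → ℝ) : ContDiff ℝ ∞ fun x => F x q p :=
  hF.comp (contDiff_id.prodMk (contDiff_const (c := (q, p))))

theorem contDiff_position_slice
    (hF : ContDiff ℝ ∞ fun x : X × (Fin d → ℝ) × (Fin d → ℝ) => F x.1 x.2.1 x.2.2)
    (x : X) (p : Fin d → ℝ) : ContDiff ℝ ∞ fun q => F x q p :=
  hF.comp (contDiff_const.prodMk (contDiff_id.prodMk contDiff_const))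

theorem contDiff_momentum_slice
    (hF : ContDiff ℝ ∞ fun x : X × (Fin d → ℝ) × (Fin d → ℝ) => F x.1 x.2.1 x.2.2)
    (x : X) (q : Fin d → ℝ) : ContDiff ℝ ∞ fun p => F x q p :=
  hF.comp (contDiff_const.prodMk (contDiff_const.prodMk contDiff_id))

theorem contDiff_pdP
    (hF : ContDiff ℝ ∞ fun x : X × (Fin d → ℝ) × (Fin d → ℝ) => F x.1 x.2.1 x.2.2)
    (i : Fin d) :
    ContDiff ℝ ∞ fun x : X × (Fin d → ℝ) × (Fin d → ℝ) => pdP i (F x.1) x.2.1 x.2.2 :=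
  ContDiff.fderiv_apply (f := fun x p' => F x.1 x.2.1 p')
    (hF.comp (contDiff_fst.fst.prodMk (contDiff_fst.snd.fst.prodMk contDiff_snd)))
    contDiff_snd.snd contDiff_const le_rfl

theorem contDiff_pdQ
    (hF : ContDiff ℝ ∞ fun x : X × (Fin d → ℝ) × (Fin d → ℝ) => F x.1 x.2.1 x.2.2)
    (i : Fin d) :
    ContDiff ℝ ∞ fun x : X × (Fin d → ℝ) × (Fin d → ℝ) => pdQ i (F x.1) x.2.1 x.2.2 :=
  ContDiff.fderiv_apply (f := fun x q' => F x.1 q' x.2.2)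
    (hF.comp (contDiff_fst.fst.prodMk (contDiff_snd.prodMk contDiff_fst.snd.snd)))
    contDiff_snd.fst contDiff_const le_rfl

theorem contDiff_gibbs (hV : ContDiff ℝ ∞ V) :
    ContDiff ℝ ∞ fun y : (Fin d → ℝ) × (Fin d → ℝ) => gibbs M V β Z y.1 y.2 := by
  unfold gibbs; simp only [mulVec, dotProduct]; fun_prop

theorem contDiff_qFlux
    (hF : ContDiff ℝ ∞ fun x : X × (Fin d → ℝ) × (Fin d → ℝ) => F x.1 x.2.1 x.2.2)
    (hV : ContDiff ℝ ∞ V) (i : Fin d) :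
    ContDiff ℝ ∞ fun x : X × (Fin d → ℝ) × (Fin d → ℝ) =>
      qFlux M V β Z (F x.1) i x.2.1 x.2.2 := by
  have hμ := (contDiff_gibbs (M := M) (β := β) (Z := Z) hV).comp (contDiff_snd (E := X))
  unfold qFlux; simp only [mulVec, dotProduct] at hμ ⊢; fun_prop

theorem contDiff_pFlux
    (hF : ContDiff ℝ ∞ fun x : X × (Fin d → ℝ) × (Fin d → ℝ) => F x.1 x.2.1 x.2.2)
    (hV : ContDiff ℝ ∞ V) (i : Fin d) :
    ContDiff ℝ ∞ fun x : X × (Fin d → ℝ) × (Fin d → ℝ) =>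
      pFlux M V γ β Z (F x.1) i x.2.1 x.2.2 := by
  have hμ := (contDiff_gibbs (M := M) (β := β) (Z := Z) hV).comp (contDiff_snd (E := X))
  have hV' : ContDiff ℝ ∞ fun q => fderiv ℝ V q (Pi.single i 1) :=
    (hV.fderiv_right le_rfl).clm_apply contDiff_const
  have hP := contDiff_pdP hF i
  unfold pFlux; fun_prop

theorem continuous_divQ
    (hF : ContDiff ℝ ∞ fun x : X × (Fin d → ℝ) × (Fin d → ℝ) => F x.1 x.2.1 x.2.2)
    (hV : ContDiff ℝ ∞ V) :
    Continuous fun x : X × (Fin d → ℝ) × (Fin d → ℝ) => divQ M V β Z (F x.1) x.2.1 x.2.2 :=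
  continuous_finsetSum _ fun i _ =>
    (contDiff_pdQ (F := fun x => qFlux M V β Z (F x) i) (contDiff_qFlux hF hV i) i).continuous

theorem continuous_divP
    (hF : ContDiff ℝ ∞ fun x : X × (Fin d → ℝ) × (Fin d → ℝ) => F x.1 x.2.1 x.2.2)
    (hV : ContDiff ℝ ∞ V) :
    Continuous fun x : X × (Fin d → ℝ) × (Fin d → ℝ) => divP M V γ β Z (F x.1) x.2.1 x.2.2 :=
  continuous_finsetSum _ fun i _ =>
    (contDiff_pdP (F := fun x => pFlux M V γ β Z (F x) i) (contDiff_pFlux hF hV i) i).continuous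

end SmoothFamilies

section DivergenceIntegrals

theorem integral_Icc_sum_fderiv_eq_zero {d : ℕ} {a b : Fin d → ℝ}
    {W : Fin d → (Fin d → ℝ) → ℝ} (hW : ∀ i, ContDiff ℝ 1 (W i))
    (hface : ∀ i x, W i (Function.update x i (b i)) = W i (Function.update x i (a i))) :
    ∫ x in Icc a b, ∑ i, fderiv ℝ (W i) x (Pi.single i 1) = 0 := by
  cases d with
  | zero => simp
  | succ n =>
    by_cases hab : a ≤ b
    swap
    · simp [Icc_eq_empty hab]
    have hdiv : Continuous fun x => ∑ i, fderiv ℝ (W i) x (Pi.single i 1) := by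
      have := fun i => (hW i).continuous_fderiv one_ne_zero
      fun_prop
    rw [integral_divergence_of_hasFDerivAt_off_countable' a b hab W (fun i => fderiv ℝ (W i)) ∅
      countable_empty (fun i => (hW i).continuous.continuousOn)
      (fun x _ i => ((hW i).differentiable one_ne_zero x).hasFDerivAt)
      (hdiv.continuousOn.integrableOn_compact isCompact_Icc)]
    refine Finset.sum_eq_zero fun i _ => sub_eq_zero.2 (integral_congr_ae (ae_of_all _ fun x => ?_))
    simpa [Fin.update_insertNth] using hface i (i.insertNth (a i) x)

theorem integral_fderiv_eq_zero_of_hasCompactSupport {E : Type*} [NormedAddCommGroup E]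
    [NormedSpace ℝ E] [FiniteDimensional ℝ E] [MeasurableSpace E] [BorelSpace E]
    {μ : Measure E} [μ.IsAddHaarMeasure] {W : E → ℝ} (hW : ContDiff ℝ 1 W)
    (hc : HasCompactSupport W) (v : E) : ∫ x, fderiv ℝ W x v ∂μ = 0 := by
  have h := integral_mul_fderiv_eq_neg_fderiv_mul_of_integrable (μ := μ) (f := fun _ => (1 : ℝ))
    (g := W) (v := v) (by simp)
    (by simpa using ((hW.continuous_fderiv one_ne_zero).clm_apply
      continuous_const).integrable_of_hasCompactSupport (hc.fderiv_apply (𝕜 := ℝ) v))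
    (by simpa using hW.continuous.integrable_of_hasCompactSupport hc)
    (fun _ _ => differentiableAt_const _) (fun x _ => hW.differentiable one_ne_zero x)
  simpa using h

theorem integral_Icc_deriv_mul_self_eq_zero {a b : ℝ} {φ : ℝ → ℝ} (hφ : ContDiff ℝ 1 φ)
    (hab : φ b = φ a) : ∫ t in Icc a b, deriv φ t * φ t = 0 := by
  have hd : ∀ t, HasDerivAt (fun t => φ t * φ t / 2) (deriv φ t * φ t) t := fun t => by
    have h := (hφ.differentiable one_ne_zero t).hasDerivAt
    exact ((h.fun_mul h).div_const 2).congr_deriv (by ring)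
  by_cases h : a ≤ b
  · rw [integral_Icc_eq_integral_Ioc, ← intervalIntegral.integral_of_le h,
      intervalIntegral.integral_eq_sub_of_hasDerivAt (fun t _ => hd t)
        (((hφ.continuous_deriv le_rfl).mul hφ.continuous).intervalIntegrable _ _),
      hab, sub_self]
  · simp [Icc_eq_empty h]

end DivergenceIntegrals

section FluxIntegrals
variable {d : ℕ} {M : Matrix (Fin d) (Fin d) ℝ} {V : (Fin d → ℝ) → ℝ} {γ β Z L : ℝ}
  {g : (Fin d → ℝ) → (Fin d → ℝ) → ℝ} {q p : Fin d → ℝ} {K : Set (Fin d → ℝ)}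

theorem update_eq_add_period (x : Fin d → ℝ) (i : Fin d) (L : ℝ) :
    Function.update x i L
      = fun j => Function.update x i 0 j + L * ((Pi.single i 1 : Fin d → ℤ) j : ℝ) := by
  funext j
  rcases eq_or_ne j i with rfl | h
  · simp
  · simp [h]

theorem pdP_eq_zero_of_notMem (hK : IsClosed K) (hg : ∀ p ∉ K, g q p = 0) (hp : p ∉ K)
    (i : Fin d) : pdP i g q p = 0 := by
  have hsupp : tsupport (g q) ⊆ K :=
    closure_minimal (fun p' hp' => by_contra fun h => hp' (hg p' h)) hK
  simp [pdP, fderiv_of_notMem_tsupport ℝ fun h => hp (hsupp h)]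

theorem divP_eq_zero_of_notMem (hK : IsClosed K) (hg : ∀ p ∉ K, g q p = 0) (hp : p ∉ K) :
    divP M V γ β Z g q p = 0 :=
  Finset.sum_eq_zero fun i _ =>
    pdP_eq_zero_of_notMem hK (fun p hp => by simp [pFlux, hg p hp]) hp i

theorem integral_divQ_eq_zero (hg : ContDiff ℝ 1 fun q => g q p) (hV : ContDiff ℝ 1 V)
    (hVper : ∀ (q : Fin d → ℝ) (m : Fin d → ℤ), V (fun j => q j + L * (m j : ℝ)) = V q)
    (hgper : ∀ (q : Fin d → ℝ) (m : Fin d → ℤ), g (fun j => q j + L * (m j : ℝ)) p = g q p) :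
    ∫ q in Icc (0 : Fin d → ℝ) (fun _ => L), divQ M V β Z g q p = 0 := by
  refine integral_Icc_sum_fderiv_eq_zero (fun i => ?_) fun i x => ?_
  · unfold qFlux gibbs; fun_prop
  · simp only [update_eq_add_period x i L, Pi.zero_apply, qFlux, gibbs, hgper, hVper]

theorem integral_divP_eq_zero (hg : ContDiff ℝ 2 (g q)) (hK : IsCompact K)
    (hgK : ∀ p ∉ K, g q p = 0) : ∫ p, divP M V γ β Z g q p = 0 := by
  have hW : ∀ i, ContDiff ℝ 1 fun p => pFlux M V γ β Z g i q p := fun i => by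
    have hg₁ : ContDiff ℝ 1 (g q) := hg.of_le one_le_two
    have hg' : ContDiff ℝ 1 fun p => pdP i g q p :=
      (hg.fderiv_right (m := 1) le_rfl).clm_apply contDiff_const
    unfold pFlux gibbs; simp only [mulVec, dotProduct]; fun_prop
  have hc : ∀ i, HasCompactSupport fun p => pFlux M V γ β Z g i q p := fun i =>
    HasCompactSupport.intro hK fun p hp => by simp [pFlux, hgK p hp]
  unfold divP pdP
  rw [integral_finsetSum _ fun i _ => (((hW i).continuous_fderiv one_ne_zero).clm_apply
    continuous_const).integrable_of_hasCompactSupport ((hc i).fderiv_apply (𝕜 := ℝ) _)]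
  exact Finset.sum_eq_zero fun i _ => integral_fderiv_eq_zero_of_hasCompactSupport (hW i) (hc i) _

end FluxIntegrals

section PhaseSpaceIntegrals
variable {d : ℕ} {s : Set ℝ} {u K : Set (Fin d → ℝ)} {h : ℝ → (Fin d → ℝ) → (Fin d → ℝ) → ℝ}

theorem setIntegral_setIntegral_setIntegral_eq_setIntegral_prod (hs : IsCompact s)
    (hu : IsCompact u) (hK : IsCompact K)
    (hh : Continuous fun x : ℝ × (Fin d → ℝ) × (Fin d → ℝ) => h x.1 x.2.1 x.2.2) :
    ∫ t in s, ∫ q in u, ∫ p in K, h t q p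
      = ∫ x in s ×ˢ (u ×ˢ K), h x.1 x.2.1 x.2.2 ∂volume.prod (volume.prod volume) := by
  rw [setIntegral_prod _ (hh.continuousOn.integrableOn_compact (hs.prod (hu.prod hK)))]
  refine setIntegral_congr_fun hs.measurableSet fun t _ => ?_
  exact (setIntegral_prod (fun y : (Fin d → ℝ) × (Fin d → ℝ) => h t y.1 y.2)
    ((hh.comp (Continuous.prodMk_right t)).continuousOn.integrableOn_compact (hu.prod hK))).symm

theorem setIntegral_prod_eq_zero_of_time_integral (hs : IsCompact s) (hu : IsCompact u)
    (hK : IsCompact K) (hh : Continuous fun x : ℝ × (Fin d → ℝ) × (Fin d → ℝ) => h x.1 x.2.1 x.2.2)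
    (h0 : ∀ q p, ∫ t in s, h t q p = 0) :
    ∫ x in s ×ˢ (u ×ˢ K), h x.1 x.2.1 x.2.2 ∂volume.prod (volume.prod volume) = 0 := by
  rw [← setIntegral_prod_swap]
  simp only [Prod.fst_swap, Prod.snd_swap]
  rw [setIntegral_prod (fun z : ((Fin d → ℝ) × (Fin d → ℝ)) × ℝ => h z.2 z.1.1 z.1.2)
    ((hh.comp continuous_swap).continuousOn.integrableOn_compact ((hu.prod hK).prod hs))]
  simp [h0]

theorem setIntegral_prod_eq_zero_of_position_integral (hs : IsCompact s) (hu : IsCompact u)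
    (hK : IsCompact K) (hh : Continuous fun x : ℝ × (Fin d → ℝ) × (Fin d → ℝ) => h x.1 x.2.1 x.2.2)
    (h0 : ∀ t p, ∫ q in u, h t q p = 0) :
    ∫ x in s ×ˢ (u ×ˢ K), h x.1 x.2.1 x.2.2 ∂volume.prod (volume.prod volume) = 0 := by
  rw [← setIntegral_setIntegral_setIntegral_eq_setIntegral_prod hs hu hK hh]
  refine integral_eq_zero_of_ae (ae_of_all _ fun t => ?_)
  have hc : Continuous fun y : (Fin d → ℝ) × (Fin d → ℝ) => h t y.1 y.2 :=
    hh.comp (Continuous.prodMk_right t)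
  change ∫ q in u, ∫ p in K, h t q p = 0
  rw [integral_integral_swap (by
    rw [Measure.prod_restrict]; exact hc.continuousOn.integrableOn_compact (hu.prod hK))]
  simp [h0]

theorem setIntegral_prod_eq_zero_of_momentum_integral (hs : IsCompact s) (hu : IsCompact u)
    (hK : IsCompact K) (hh : Continuous fun x : ℝ × (Fin d → ℝ) × (Fin d → ℝ) => h x.1 x.2.1 x.2.2)
    (h0 : ∀ t q, ∫ p in K, h t q p = 0) :
    ∫ x in s ×ˢ (u ×ˢ K), h x.1 x.2.1 x.2.2 ∂volume.prod (volume.prod volume) = 0 := by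
  simp [← setIntegral_setIntegral_setIntegral_eq_setIntegral_prod hs hu hK hh, h0]

theorem setIntegral_setIntegral_integral_eq_neg_mul (hs : IsCompact s) (hu : IsCompact u)
    (hK : IsCompact K) {Φ A B C Ψ : ℝ → (Fin d → ℝ) → (Fin d → ℝ) → ℝ} {c : ℝ}
    (hΦ : ∀ t q p, Φ t q p = A t q p + B t q p + C t q p - c * Ψ t q p)
    (hA : Continuous fun x : ℝ × (Fin d → ℝ) × (Fin d → ℝ) => A x.1 x.2.1 x.2.2)
    (hB : Continuous fun x : ℝ × (Fin d → ℝ) × (Fin d → ℝ) => B x.1 x.2.1 x.2.2)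
    (hC : Continuous fun x : ℝ × (Fin d → ℝ) × (Fin d → ℝ) => C x.1 x.2.1 x.2.2)
    (hΨ : Continuous fun x : ℝ × (Fin d → ℝ) × (Fin d → ℝ) => Ψ x.1 x.2.1 x.2.2)
    (hΦK : ∀ t q p, p ∉ K → Φ t q p = 0) (hCK : ∀ t q p, p ∉ K → C t q p = 0)
    (hΨK : ∀ t q p, p ∉ K → Ψ t q p = 0)
    (hA0 : ∀ q p, ∫ t in s, A t q p = 0) (hB0 : ∀ t p, ∫ q in u, B t q p = 0)
    (hC0 : ∀ t q, ∫ p, C t q p = 0) :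
    ∫ t in s, ∫ q in u, ∫ p, Φ t q p = -c * ∫ t in s, ∫ q in u, ∫ p, Ψ t q p := by
  have hrestrict : ∀ {h : ℝ → (Fin d → ℝ) → (Fin d → ℝ) → ℝ}, (∀ t q p, p ∉ K → h t q p = 0) →
      ∀ t q, ∫ p, h t q p = ∫ p in K, h t q p :=
    fun hh t q => (setIntegral_eq_integral_of_forall_compl_eq_zero (hh t q)).symm
  have hint : ∀ {h : ℝ × (Fin d → ℝ) × (Fin d → ℝ) → ℝ}, Continuous h →
      IntegrableOn h (s ×ˢ (u ×ˢ K)) (volume.prod (volume.prod volume)) :=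
    fun hh => hh.continuousOn.integrableOn_compact (hs.prod (hu.prod hK))
  simp only [hrestrict hΦK, hrestrict hΨK]
  obtain rfl : Φ = fun t q p => A t q p + B t q p + C t q p - c * Ψ t q p :=
    funext fun t => funext fun q => funext fun p => hΦ t q p
  rw [setIntegral_setIntegral_setIntegral_eq_setIntegral_prod hs hu hK
      (((hA.fun_add hB).fun_add hC).fun_sub (continuous_const.fun_mul hΨ)),
    setIntegral_setIntegral_setIntegral_eq_setIntegral_prod hs hu hK hΨ,
    integral_sub (hint ((hA.fun_add hB).fun_add hC)) (hint (continuous_const.fun_mul hΨ)),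
    integral_add (hint (hA.fun_add hB)) (hint hC), integral_add (hint hA) (hint hB),
    integral_const_mul, setIntegral_prod_eq_zero_of_time_integral hs hu hK hA hA0,
    setIntegral_prod_eq_zero_of_position_integral hs hu hK hB hB0,
    setIntegral_prod_eq_zero_of_momentum_integral hs hu hK hC
      fun t q => (hrestrict hCK t q).symm.trans (hC0 t q)]
  ring

end PhaseSpaceIntegrals

section Langevin
variable {d : ℕ} {M : Matrix (Fin d) (Fin d) ℝ} {V : (Fin d → ℝ) → ℝ} {γ β Z : ℝ}
  {f : ℝ → (Fin d → ℝ) → (Fin d → ℝ) → ℝ}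

theorem deriv_add_A0_mul_mul_gibbs
    (hf : ContDiff ℝ ∞ fun x : ℝ × (Fin d → ℝ) × (Fin d → ℝ) => f x.1 x.2.1 x.2.2)
    (hV : ContDiff ℝ ∞ V) (hM : M⁻¹.IsSymm) (hβ : β ≠ 0) (t : ℝ) (q p : Fin d → ℝ) :
    (deriv (fun t' => f t' q p) t + A0 M V γ β (f t) q p) * f t q p * gibbs M V β Z q p
      = deriv (fun t' => f t' q p) t * f t q p * gibbs M V β Z q p + divQ M V β Z (f t) q p
        + divP M V γ β Z (f t) q p - γ / β * ((∑ i, pdP i (f t) q p ^ 2) * gibbs M V β Z q p) := by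
  rw [add_mul, add_mul, A0_mul_mul_gibbs hM hβ (hV.differentiable (by simp) q)
    ((contDiff_position_slice hf t p).differentiable (by simp) q)
    ((contDiff_momentum_slice hf t q).differentiable (by simp) p)
    (fun i => (contDiff_momentum_slice (F := fun t q p => pdP i (f t) q p) (contDiff_pdP hf i)
      t q).differentiable (by simp) p)]
  ring

theorem continuous_deriv_mul_mul_gibbs
    (hf : ContDiff ℝ ∞ fun x : ℝ × (Fin d → ℝ) × (Fin d → ℝ) => f x.1 x.2.1 x.2.2)
    (hV : ContDiff ℝ ∞ V) :
    Continuous fun x : ℝ × (Fin d → ℝ) × (Fin d → ℝ) =>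
      deriv (fun t => f t x.2.1 x.2.2) x.1 * f x.1 x.2.1 x.2.2 * gibbs M V β Z x.2.1 x.2.2 := by
  have hderiv : ContDiff ℝ ∞ fun x : ℝ × (Fin d → ℝ) × (Fin d → ℝ) =>
      deriv (fun t => f t x.2.1 x.2.2) x.1 :=
    ContDiff.fderiv_apply (f := fun (x : ℝ × (Fin d → ℝ) × (Fin d → ℝ)) (t : ℝ) => f t x.2.1 x.2.2)
      (hf.comp (contDiff_snd.prodMk contDiff_fst.snd)) contDiff_fst contDiff_const le_rfl
  exact (hderiv.continuous.mul hf.continuous).mul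
    ((contDiff_gibbs hV).continuous.comp continuous_snd)

theorem continuous_sum_pdP_sq_mul_gibbs
    (hf : ContDiff ℝ ∞ fun x : ℝ × (Fin d → ℝ) × (Fin d → ℝ) => f x.1 x.2.1 x.2.2)
    (hV : ContDiff ℝ ∞ V) :
    Continuous fun x : ℝ × (Fin d → ℝ) × (Fin d → ℝ) =>
      (∑ i, pdP i (f x.1) x.2.1 x.2.2 ^ 2) * gibbs M V β Z x.2.1 x.2.2 :=
  (continuous_finsetSum _ fun i _ => (contDiff_pdP hf i).continuous.pow 2).mul
    ((contDiff_gibbs hV).continuous.comp continuous_snd)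

end Langevin

theorem dirichlet_form_identity_general
    {d : ℕ} (L T γ β Z : ℝ)
    (hβ : 0 < β)
    (M : Matrix (Fin d) (Fin d) ℝ) (hM : M.PosDef)
    (V : (Fin d → ℝ) → ℝ) (hV : ContDiff ℝ (⊤ : ℕ∞) V)
    (hVper : ∀ (q : Fin d → ℝ) (m : Fin d → ℤ), V (fun j => q j + L * (m j : ℝ)) = V q)
    (f : ℝ → (Fin d → ℝ) → (Fin d → ℝ) → ℝ)
    (hf : ContDiff ℝ (⊤ : ℕ∞) (fun x : ℝ × (Fin d → ℝ) × (Fin d → ℝ) => f x.1 x.2.1 x.2.2))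
    (hfT : ∀ (t : ℝ) (q p : Fin d → ℝ), f (t + T) q p = f t q p)
    (hfq : ∀ (t : ℝ) (q p : Fin d → ℝ) (m : Fin d → ℤ),
      f t (fun j => q j + L * (m j : ℝ)) p = f t q p)
    (hfp : ∃ K : Set (Fin d → ℝ), IsCompact K ∧
      ∀ (t : ℝ) (q p : Fin d → ℝ), p ∉ K → f t q p = 0) :
    (∫ t in Set.Icc (0:ℝ) T, ∫ q in Set.Icc (0 : Fin d → ℝ) (fun _ => L), ∫ p : Fin d → ℝ,
        (deriv (fun t' => f t' q p) t + A0 M V γ β (f t) q p) * f t q p * gibbs M V β Z q p)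
      = -(γ / β) * ∫ t in Set.Icc (0:ℝ) T, ∫ q in Set.Icc (0 : Fin d → ℝ) (fun _ => L),
          ∫ p : Fin d → ℝ, (∑ i, (pdP i (f t) q p) ^ 2) * gibbs M V β Z q p := by
  obtain ⟨K, hK, hfK⟩ := hfp
  refine setIntegral_setIntegral_integral_eq_neg_mul isCompact_Icc isCompact_Icc hK
    (deriv_add_A0_mul_mul_gibbs hf hV (isHermitian_iff_isSymm.mp hM.isHermitian.inv) hβ.ne')
    (continuous_deriv_mul_mul_gibbs hf hV) (continuous_divQ hf hV) (continuous_divP hf hV)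
    (continuous_sum_pdP_sq_mul_gibbs hf hV) (fun t q p hp => by simp [hfK t q p hp])
    (fun t q p hp => divP_eq_zero_of_notMem hK.isClosed (hfK t q) hp)
    (fun t q p hp => by simp [pdP_eq_zero_of_notMem hK.isClosed (hfK t q) hp])
    (fun q p => ?_) (fun t p => ?_) (fun t q => ?_)
  · rw [integral_mul_const, integral_Icc_deriv_mul_self_eq_zero
      ((contDiff_param_slice hf q p).of_le ENat.LEInfty.out) (by simpa using hfT 0 q p), zero_mul]
  · exact integral_divQ_eq_zero ((contDiff_position_slice hf t p).of_le ENat.LEInfty.out)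
      (hV.of_le ENat.LEInfty.out) hVper (hfq t · p)
  · exact integral_divP_eq_zero ((contDiff_momentum_slice hf t q).of_le ENat.LEInfty.out) hK
      (hfK t q)

/-- for every smooth `f`, `T`-periodic in time, `L·ℤ^d`-periodic in `q` and
compactly supported in `p`,
`∫ (∂_t f + A₀f) f dμ = −(γ/β) ∫ |∇_p f|² dμ`. -/
theorem dirichlet_form_identity
    {d : ℕ} (hd : 1 ≤ d) (L T γ β Z : ℝ) (hL : 0 < L) (hT : 0 < T) (hγ : 0 < γ)
    (hβ : 0 < β) (hZ : 0 < Z)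
    (M : Matrix (Fin d) (Fin d) ℝ) (hM : M.PosDef)
    (V : (Fin d → ℝ) → ℝ) (hV : ContDiff ℝ (⊤ : ℕ∞) V)
    (hVper : ∀ (q : Fin d → ℝ) (m : Fin d → ℤ), V (fun j => q j + L * (m j : ℝ)) = V q)
    (hZnorm : ∫ q in Set.Icc (0 : Fin d → ℝ) (fun _ => L),
      ∫ p : Fin d → ℝ, gibbs M V β Z q p = 1)
    (f : ℝ → (Fin d → ℝ) → (Fin d → ℝ) → ℝ)
    (hf : ContDiff ℝ (⊤ : ℕ∞) (fun x : ℝ × (Fin d → ℝ) × (Fin d → ℝ) => f x.1 x.2.1 x.2.2))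
    (hfT : ∀ (t : ℝ) (q p : Fin d → ℝ), f (t + T) q p = f t q p)
    (hfq : ∀ (t : ℝ) (q p : Fin d → ℝ) (m : Fin d → ℤ),
      f t (fun j => q j + L * (m j : ℝ)) p = f t q p)
    (hfp : ∃ K : Set (Fin d → ℝ), IsCompact K ∧
      ∀ (t : ℝ) (q p : Fin d → ℝ), p ∉ K → f t q p = 0) :
    (∫ t in Set.Icc (0:ℝ) T, ∫ q in Set.Icc (0 : Fin d → ℝ) (fun _ => L), ∫ p : Fin d → ℝ,
        (deriv (fun t' => f t' q p) t + A0 M V γ β (f t) q p) * f t q p * gibbs M V β Z q p)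
      = -(γ / β) * ∫ t in Set.Icc (0:ℝ) T, ∫ q in Set.Icc (0 : Fin d → ℝ) (fun _ => L),
          ∫ p : Fin d → ℝ, (∑ i, (pdP i (f t) q p) ^ 2) * gibbs M V β Z q p :=
  dirichlet_form_identity_general L T γ β Z hβ M hM V hV hVper f hf hfT hfq hfp
end
end
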